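/- arXiv:2402.10298 — 8 statements merged into one kernel-verified Lean document; each statement's English description precedes it below -/
import Mathlib

section
/- Let x ∈ ℕ^E be obtained from the zero vector by q steps: there are elements e_1,…,e_q ∈ E and positive integers l_1,…,l_q with x_0 = 0, x_i = x_{i-1} + l_i·χ_{e_i}, and x_q = x. Suppose t > 0 and for each i one has g(x_{i-1} + l_i·χ_{e_i}) − g(x_{i-1}) − t·c(l_i·χ_{e_i}) ≥ l_i·τ, where g is normalized. Then c(x) ≤ (1/t)·g(x) − (τ/t)·x(E). (Inequality (3.1.4): upper bound on the cost of the accepted solution.) -/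
/-!
The potential `g y - t * c y - τ * y(E)` vanishes at `0` and, by the assumed inequality together
with the additivity of `c` and of `y ↦ y(E)`, does not decrease along the path `x₀, …, x_q`.
Hence it is nonnegative at `x = x_q`, which after dividing by `t > 0` is the claimed bound.
-/

open Finset

theorem le_of_forall_lt_le_succ {α : Type*} [Preorder α] {f : ℕ → α} {q : ℕ}
    (hf : ∀ n < q, f n ≤ f (n + 1)) : f 0 ≤ f q := by
  induction q with
  | zero => exact le_rfl
  | succ q ih =>
    exact (ih fun n hn => hf n (hn.trans q.lt_succ_self)).trans (hf q q.lt_succ_self)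

section WeightedSum

variable {E : Type*} [Fintype E]

theorem sum_mul_natCast_add (w : E → ℝ) (x y : E → ℕ) :
    ∑ e, w e * ((x + y) e : ℝ) = ∑ e, w e * (x e : ℝ) + ∑ e, w e * (y e : ℝ) := by
  simp only [Pi.add_apply, Nat.cast_add, mul_add, sum_add_distrib]

theorem sum_natCast_add (x y : E → ℕ) :
    ∑ e, ((x + y) e : ℝ) = ∑ e, (x e : ℝ) + ∑ e, (y e : ℝ) := by
  simpa only [Pi.one_apply, one_mul] using sum_mul_natCast_add 1 x y

theorem sum_natCast_nsmul_single [DecidableEq E] (n : ℕ) (a : E) :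
    ∑ e, ((n • Pi.single a 1 : E → ℕ) e : ℝ) = n := by
  simp [Pi.single_apply]

def potential (g c : (E → ℕ) → ℝ) (τ t : ℝ) (y : E → ℕ) : ℝ :=
  g y - t * c y - τ * ∑ e, (y e : ℝ)

theorem potential_le_potential_add {g c : (E → ℕ) → ℝ} {w : E → ℝ}
    (hc : ∀ x : E → ℕ, c x = ∑ e, w e * (x e : ℝ)) {τ t : ℝ} {y d : E → ℕ}
    (hd : g (y + d) - g y - t * c d ≥ (∑ e, (d e : ℝ)) * τ) :
    potential g c τ t y ≤ potential g c τ t (y + d) := by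
  have hc_add : c (y + d) = c y + c d := by simp only [hc, sum_mul_natCast_add]
  rw [potential, potential, hc_add, sum_natCast_add]
  linarith

end WeightedSum

theorem stmt_3_general {E : Type*} [Fintype E] [DecidableEq E]
    (g c : (E → ℕ) → ℝ)
    (hg0 : g 0 = 0)
    (w : E → ℝ)
    (hc : ∀ x : E → ℕ, c x = ∑ e, w e * (x e : ℝ))
    (τ t : ℝ) (ht : 0 < t)
    (q : ℕ) (e : ℕ → E) (l : ℕ → ℕ)
    (xs : ℕ → E → ℕ) (hx0 : xs 0 = 0)
    (hstep : ∀ i < q, xs (i + 1) = xs i + (l i) • Pi.single (e i) 1)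
    (x : E → ℕ) (hxq : xs q = x)
    (hineq : ∀ i < q,
      g (xs i + (l i) • Pi.single (e i) 1) - g (xs i)
        - t * c ((l i) • Pi.single (e i) 1) ≥ (l i : ℝ) * τ) :
    c x ≤ (1 / t) * g x - (τ / t) * (∑ e', (x e' : ℝ)) := by
  let Φ : ℕ → ℝ := fun n => potential g c τ t (xs n)
  have hΦ0 : Φ 0 = 0 := by simp [Φ, potential, hx0, hg0, hc]
  have hΦ_mono : ∀ n < q, Φ n ≤ Φ (n + 1) := fun n hn => by
    simp only [Φ, hstep n hn]
    refine potential_le_potential_add hc ?_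
    rw [sum_natCast_nsmul_single]
    exact hineq n hn
  have hΦq : 0 ≤ potential g c τ t x := by
    simpa only [Φ, hΦ0, hxq] using le_of_forall_lt_le_succ hΦ_mono
  rw [potential] at hΦq
  rw [div_mul_eq_mul_div, one_mul, div_mul_eq_mul_div, div_sub_div_same, le_div_iff₀ ht]
  linarith

/-- Inequality (3.1.4): upper bound on the cost of the accepted solution. -/
theorem stmt_3 {E : Type*} [Fintype E] [DecidableEq E]
    (g c : (E → ℕ) → ℝ)
    (hg0 : g 0 = 0) (hgnn : ∀ x : E → ℕ, 0 ≤ g x)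
    (w : E → ℝ) (hw : ∀ e, 0 ≤ w e)
    (hc : ∀ x : E → ℕ, c x = ∑ e, w e * (x e : ℝ))
    (τ t : ℝ) (ht : 0 < t)
    (q : ℕ) (e : ℕ → E) (l : ℕ → ℕ) (hl : ∀ i < q, 0 < l i)
    (xs : ℕ → E → ℕ) (hx0 : xs 0 = 0)
    (hstep : ∀ i < q, xs (i + 1) = xs i + (l i) • Pi.single (e i) 1)
    (x : E → ℕ) (hxq : xs q = x)
    (hineq : ∀ i < q,
      g (xs i + (l i) • Pi.single (e i) 1) - g (xs i)
        - t * c ((l i) • Pi.single (e i) 1) ≥ (l i : ℝ) * τ) :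
    c x ≤ (1 / t) * g x - (τ / t) * (∑ e', (x e' : ℝ)) :=
  stmt_3_general g c hg0 w hc τ t ht q e l xs hx0 hstep x hxq hineq
end

section
/- Let g : ℕ^E → ℝ be normalized, nonnegative, monotone and DR-submodular, let c be nonnegative linear, let t ≥ 1, τ ∈ ℝ, k a positive integer, and let x, x* ∈ ℕ^E with x̄ = (x* − x) ∨ 0. Suppose: (i) x is obtained from 0 by steps x_i = x_{i-1} + l_i·χ_{e_i} with g(x_{i-1} + l_i·χ_{e_i}) − g(x_{i-1}) − t·c(l_i·χ_{e_i}) ≥ l_i·τ for every step; (ii) for every e ∈ E with x̄(e) > 0 there exists y_e ≤ x with g(y_e + χ_e) − g(y_e) − t·c(χ_e) < τ; and (iii) x̄(E) = μ·k and x(E) = ν·k for reals μ, ν ∈ [0,1]. Then g(x) − c(x) ≥ ((t−1)/t)·g(x*) − (t−1)·c(x*) + k·τ·(ν/t − ((t−1)/t)·μ). (Lemma 3.2.) -/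
/-- Lemma 3.2: lower bound for the value of the output of Algorithm 1 when the
cardinality budget is not exhausted. -/
theorem stmt_4 {E : Type*} [Fintype E] [DecidableEq E]
    (g c : (E → ℕ) → ℝ)
    (hg0 : g 0 = 0) (hgnn : ∀ x : E → ℕ, 0 ≤ g x)
    (hmono : Monotone g)
    (hDR : ∀ x y : E → ℕ, x ≤ y → ∀ e : E,
      g (y + Pi.single e 1) - g y ≤ g (x + Pi.single e 1) - g x)
    (w : E → ℝ) (hw : ∀ e, 0 ≤ w e)
    (hc : ∀ x : E → ℕ, c x = ∑ e, w e * (x e : ℝ))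
    (t : ℝ) (ht : 1 ≤ t) (τ : ℝ) (k : ℕ) (hk : 0 < k)
    (x xstar : E → ℕ)
    (xbar : E → ℕ) (hxbar : ∀ e, xbar e = xstar e - x e)
    -- (i) x is obtained from 0 by accepted steps
    (q : ℕ) (e : ℕ → E) (l : ℕ → ℕ) (hl : ∀ i < q, 0 < l i)
    (xs : ℕ → E → ℕ) (hx0 : xs 0 = 0)
    (hstep : ∀ i < q, xs (i + 1) = xs i + (l i) • Pi.single (e i) 1)
    (hxq : xs q = x)
    (hineq : ∀ i < q,
      g (xs i + (l i) • Pi.single (e i) 1) - g (xs i)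
        - t * c ((l i) • Pi.single (e i) 1) ≥ (l i : ℝ) * τ)
    -- (ii) rejection conditions
    (hrej : ∀ e' : E, 0 < xbar e' → ∃ y : E → ℕ, y ≤ x ∧
      g (y + Pi.single e' 1) - g y - t * c (Pi.single e' 1) < τ)
    -- (iii) cardinalities
    (μ ν : ℝ) (hμ0 : 0 ≤ μ) (hμ1 : μ ≤ 1) (hν0 : 0 ≤ ν) (hν1 : ν ≤ 1)
    (hμ : (∑ e', (xbar e' : ℝ)) = μ * k)
    (hν : (∑ e', (x e' : ℝ)) = ν * k) :
    g x - c x ≥ ((t - 1) / t) * g xstar - (t - 1) * c xstar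
      + (k : ℝ) * τ * (ν / t - ((t - 1) / t) * μ) := by
  have htpos : (0:ℝ) < t := lt_of_lt_of_le one_pos ht
  have ht0 : (0:ℝ) ≤ t - 1 := by linarith
  have hc0 : c 0 = 0 := by simp [hc]
  have hcadd : ∀ a b : E → ℕ, c (a + b) = c a + c b := by
    intro a b
    simp [hc, Pi.add_apply, Nat.cast_add, mul_add, Finset.sum_add_distrib]
  have hcw : ∀ e0 : E, c (Pi.single e0 1) = w e0 := by
    intro e0
    simp [hc, Pi.single_apply]
  -- Part A
  have keyA : ∀ m, m ≤ q → g (xs m) - t * c (xs m) ≥ (∑ e', ((xs m e' : ℝ))) * τ := by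
    intro m
    induction m with
    | zero => intro _; simp [hx0, hg0, hc0]
    | succ n ih =>
      intro hm
      have hn : n < q := hm
      have ihn := ih (le_of_lt hn)
      have hst := hstep n hn
      have hsum : (∑ e', ((xs (n+1) e' : ℝ))) = (∑ e', ((xs n e' : ℝ))) + l n := by
        rw [hst]
        push_cast [Pi.add_apply, Pi.smul_apply, Pi.single_apply, mul_ite]
        rw [Finset.sum_add_distrib]
        simp
      have hi := hineq n hn
      rw [hsum, hst, hcadd]
      nlinarith [hi, ihn]
  have factA : g x - t * c x ≥ (ν * k) * τ := by
    have := keyA q le_rfl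
    rw [hxq, hν] at this
    exact this
  -- Part B: induction adding elements of xbar one at a time
  have keyB : ∀ n : ℕ, ∀ z : E → ℕ, x ≤ z → (∀ e', z e' ≤ x e' + xbar e') →
      (∑ e', (z e' - x e')) = n →
      g z ≤ g x + ∑ e', ((z e' : ℝ) - (x e' : ℝ)) * (τ + t * w e') := by
    intro n
    induction n with
    | zero =>
      intro z hxz hub hs
      have hz : z = x := by
        funext e'
        have h1 := Finset.sum_eq_zero_iff.mp hs e' (Finset.mem_univ e')
        have h2 : x e' ≤ z e' := hxz e'
        omega
      subst hz
      simp
    | succ n ih =>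
      intro z hxz hub hs
      have hex : ∃ e0, x e0 < z e0 := by
        by_contra hcon
        push_neg at hcon
        have : (∑ e', (z e' - x e')) = 0 := by
          apply Finset.sum_eq_zero
          intro e' _
          have := hcon e'
          omega
        omega
      obtain ⟨e0, he0⟩ := hex
      set z' : E → ℕ := Function.update z e0 (z e0 - 1) with hz'def
      have hz'app : ∀ e', z' e' = if e' = e0 then z e0 - 1 else z e' := by
        intro e'
        simp [hz'def, Function.update_apply]
      have hzz' : z = z' + Pi.single e0 1 := by
        funext e'
        simp only [Pi.add_apply, Pi.single_apply, hz'app]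
        by_cases h : e' = e0 <;> simp [h] <;> omega
      have hxz' : x ≤ z' := by
        intro e'
        have h2 : x e' ≤ z e' := hxz e'
        rw [hz'app]
        by_cases h : e' = e0
        · subst h; simp; omega
        · simp [h]; exact h2
      have hub' : ∀ e', z' e' ≤ x e' + xbar e' := by
        intro e'
        rw [hz'app]
        have h2 := hub e'
        by_cases h : e' = e0
        · subst h; simp; omega
        · simp [h]; exact h2
      have hsplitN : ∀ f : E → ℕ, (∑ e', f e') = f e0 + ∑ e' ∈ Finset.univ.erase e0, f e' :=
        fun f => (Finset.add_sum_erase _ f (Finset.mem_univ e0)).symm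
      have hsplitR : ∀ f : E → ℝ, (∑ e', f e') = f e0 + ∑ e' ∈ Finset.univ.erase e0, f e' :=
        fun f => (Finset.add_sum_erase _ f (Finset.mem_univ e0)).symm
      have herase : ∀ e' ∈ Finset.univ.erase e0, z' e' = z e' := by
        intro e' he'
        rw [hz'app, if_neg (Finset.mem_erase.mp he').1]
      have hEN : (∑ e' ∈ Finset.univ.erase e0, (z' e' - x e'))
          = ∑ e' ∈ Finset.univ.erase e0, (z e' - x e') :=
        Finset.sum_congr rfl (fun e' he' => by rw [herase e' he'])
      have hs' : (∑ e', (z' e' - x e')) = n := by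
        rw [hsplitN] at hs ⊢
        rw [hEN, hz'app, if_pos rfl]
        omega
      have ihz := ih z' hxz' hub' hs'
      -- marginal bound
      have hxbar0 : 0 < xbar e0 := by
        have := hub e0
        omega
      obtain ⟨y, hyx, hylt⟩ := hrej e0 hxbar0
      have hdr := hDR y z' (le_trans hyx hxz') e0
      rw [hcw] at hylt
      have hmarg : g (z' + Pi.single e0 1) - g z' < τ + t * w e0 := by linarith
      -- relate the two real sums
      have hsumR : (∑ e', ((z e' : ℝ) - (x e' : ℝ)) * (τ + t * w e'))
          = (∑ e', ((z' e' : ℝ) - (x e' : ℝ)) * (τ + t * w e')) + (τ + t * w e0) := by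
        have hER : (∑ e' ∈ Finset.univ.erase e0, ((z' e' : ℝ) - (x e' : ℝ)) * (τ + t * w e'))
            = ∑ e' ∈ Finset.univ.erase e0, ((z e' : ℝ) - (x e' : ℝ)) * (τ + t * w e') :=
          Finset.sum_congr rfl (fun e' he' => by rw [herase e' he'])
        rw [hsplitR (fun e' => ((z e' : ℝ) - (x e' : ℝ)) * (τ + t * w e')),
            hsplitR (fun e' => ((z' e' : ℝ) - (x e' : ℝ)) * (τ + t * w e')), hER]
        have h1 : ((z' e0 : ℝ)) = (z e0 : ℝ) - 1 := by
          rw [hz'app, if_pos rfl]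
          have : (1:ℕ) ≤ z e0 := by omega
          push_cast [Nat.cast_sub this]
          ring
        rw [h1]
        ring
      have hgz : g z = g (z' + Pi.single e0 1) := by rw [← hzz']
      rw [hsumR, hgz]
      linarith
  have hxble : ∀ e', x e' ≤ x e' + xbar e' := fun e' => Nat.le_add_right _ _
  have hsxbar : (∑ e', ((x + xbar) e' - x e')) = ∑ e', xbar e' := by
    apply Finset.sum_congr rfl
    intro e' _
    simp [Pi.add_apply]
  have hB := keyB (∑ e', xbar e') (x + xbar) (fun e' => Nat.le_add_right _ _)
      (fun e' => le_of_eq rfl) hsxbar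
  have hrhs : (∑ e', (((x + xbar) e' : ℝ) - (x e' : ℝ)) * (τ + t * w e'))
      = τ * (μ * k) + t * c xbar := by
    rw [hc]
    rw [← hμ]
    rw [Finset.mul_sum, Finset.mul_sum, ← Finset.sum_add_distrib]
    apply Finset.sum_congr rfl
    intro e' _
    simp [Pi.add_apply]
    push_cast
    ring
  rw [hrhs] at hB
  have hstarle : xstar ≤ x + xbar := by
    intro e'
    have := hxbar e'
    simp [Pi.add_apply]
    omega
  have hgx : g xstar ≤ g (x + xbar) := hmono hstarle
  have hcbar : c xbar ≤ c xstar := by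
    rw [hc, hc]
    apply Finset.sum_le_sum
    intro e' _
    have h1 : xbar e' ≤ xstar e' := by rw [hxbar]; omega
    have : (xbar e' : ℝ) ≤ (xstar e' : ℝ) := by exact_mod_cast h1
    nlinarith [hw e']
  have factB : g xstar ≤ g x + τ * (μ * k) + t * c xstar := by
    nlinarith [hB, hgx, hcbar]
  -- final arithmetic
  rw [ge_iff_le, ← sub_nonneg]
  have hexp : g x - c x - (((t - 1) / t) * g xstar - (t - 1) * c xstar
      + (k : ℝ) * τ * (ν / t - ((t - 1) / t) * μ))
      = (1 / t) * (t * (g x - c x) - ((t - 1) * g xstar - t * (t - 1) * c xstar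
        + (k : ℝ) * τ * (ν - (t - 1) * μ))) := by
    field_simp
  rw [hexp]
  apply mul_nonneg (by positivity)
  nlinarith [factA, factB, mul_nonneg ht0 (sub_nonneg.mpr factB)]
end

section
/- Let g : ℕ^E → ℝ be normalized, nonnegative, monotone and DR-submodular, let c be nonnegative linear, let k be a positive integer, and let x, x* ∈ ℕ^E with x̄ = (x* − x) ∨ 0. Let μ, ν ∈ [0,1] with ν < 1, δ = μ² + 4 − 4ν, t = (2 + μ + √δ)/2, and τ = (1/k)·((t−1)/(t + μ(t−1) − ν))·(g(x*) − t·c(x*)). Suppose x is obtained from 0 by steps x_i = x_{i-1} + l_i·χ_{e_i} with g(x_{i-1} + l_i·χ_{e_i}) − g(x_{i-1}) − t·c(l_i·χ_{e_i}) ≥ l_i·τ for every step, and that either (a) x(E) = k, or (b) x(E) = ν·k, x̄(E) = μ·k, and for every e ∈ E with x̄(e) > 0 there exists y_e ≤ x with g(y_e + χ_e) − g(y_e) − t·c(χ_e) < τ. Then g(x) − c(x) ≥ ((t−1)/(t + μ(t−1) − ν))·g(x*) − ((t−1)·t/(t + μ(t−1) − ν))·c(x*). (Theorem 3.1: the bicriteria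 ratio of Algorithm 1 is ((t−1)/(t+μ(t−1)−ν), ((t−1)/(t+μ(t−1)−ν))·t).) -/
lemma dr_decomp_aux {E : Type*} [Fintype E] [DecidableEq E] (g : (E → ℕ) → ℝ)
    (hDR : ∀ x y : E → ℕ, x ≤ y → ∀ e : E,
      g (y + Pi.single e 1) - g y ≤ g (x + Pi.single e 1) - g x)
    (x : E → ℕ) :
    ∀ n (z : E → ℕ), (∑ e, z e) = n →
      g (x + z) - g x ≤ ∑ e, (z e : ℝ) * (g (x + Pi.single e 1) - g x) := by
  intro n
  induction n with
  | zero =>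
    intro z hz
    have hz0 : z = 0 := by
      funext e'
      have := (Finset.sum_eq_zero_iff.mp hz) e' (Finset.mem_univ _)
      simpa using this
    simp [hz0]
  | succ n ih =>
    intro z hz
    obtain ⟨e0, he0⟩ : ∃ e0, 0 < z e0 := by
      by_contra h
      push_neg at h
      have : ∑ e', z e' = 0 := Finset.sum_eq_zero (fun e' _ => Nat.le_zero.mp (h e'))
      omega
    set z' : E → ℕ := z - Pi.single e0 1 with hz'
    have hzz : z = z' + Pi.single e0 1 := by
      funext e'
      by_cases he : e' = e0
      · simp [hz', Pi.single_apply, he]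
        omega
      · simp [hz', Pi.single_apply, he]
    have hsum' : ∑ e', z' e' = n := by
      have h1 : ∑ e', z e' = (∑ e', z' e') + ∑ e', (Pi.single e0 1 : E → ℕ) e' := by
        rw [hzz]; exact Finset.sum_add_distrib
      have h2 : ∑ e', (Pi.single e0 1 : E → ℕ) e' = 1 := by
        simp [Pi.single_apply]
      omega
    have hle : x ≤ x + z' := fun e' => Nat.le_add_right _ _
    have hmarg := hDR x (x + z') hle e0
    have hIH := ih z' hsum'
    have hxz : x + z = (x + z') + Pi.single e0 1 := by rw [hzz, add_assoc]
    have hsingle : ∑ e', ((Pi.single e0 1 : E → ℕ) e' : ℝ) * (g (x + Pi.single e' 1) - g x)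
        = g (x + Pi.single e0 1) - g x := by
      simp [Pi.single_apply]
    have hsplit : ∑ e', (z e' : ℝ) * (g (x + Pi.single e' 1) - g x)
        = (∑ e', (z' e' : ℝ) * (g (x + Pi.single e' 1) - g x))
          + (g (x + Pi.single e0 1) - g x) := by
      rw [← hsingle, ← Finset.sum_add_distrib]
      apply Finset.sum_congr rfl
      intro e' _
      rw [hzz]
      simp only [Pi.add_apply]
      push_cast
      ring
    rw [hxz, hsplit]
    linarith

/-- Theorem 3.1: the bicriteria ratio of Algorithm 1 is
((t−1)/(t+μ(t−1)−ν), ((t−1)/(t+μ(t−1)−ν))·t). -/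
theorem stmt_6 {E : Type*} [Fintype E] [DecidableEq E]
    (g c : (E → ℕ) → ℝ)
    (hg0 : g 0 = 0) (hgnn : ∀ x : E → ℕ, 0 ≤ g x)
    (hmono : Monotone g)
    (hDR : ∀ x y : E → ℕ, x ≤ y → ∀ e : E,
      g (y + Pi.single e 1) - g y ≤ g (x + Pi.single e 1) - g x)
    (w : E → ℝ) (hw : ∀ e, 0 ≤ w e)
    (hc : ∀ x : E → ℕ, c x = ∑ e, w e * (x e : ℝ))
    (k : ℕ) (hk : 0 < k)
    (x xstar : E → ℕ)
    (xbar : E → ℕ) (hxbar : ∀ e, xbar e = xstar e - x e)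
    (μ ν : ℝ) (hμ0 : 0 ≤ μ) (hμ1 : μ ≤ 1) (hν0 : 0 ≤ ν) (hν1 : ν < 1)
    (δ : ℝ) (hδ : δ = μ ^ 2 + 4 - 4 * ν)
    (t : ℝ) (ht : t = (2 + μ + Real.sqrt δ) / 2)
    (τ : ℝ)
    (hτ : τ = (1 / (k : ℝ)) * ((t - 1) / (t + μ * (t - 1) - ν))
      * (g xstar - t * c xstar))
    -- x is obtained from 0 by accepted steps
    (q : ℕ) (e : ℕ → E) (l : ℕ → ℕ) (hl : ∀ i < q, 0 < l i)
    (xs : ℕ → E → ℕ) (hx0 : xs 0 = 0)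
    (hstep : ∀ i < q, xs (i + 1) = xs i + (l i) • Pi.single (e i) 1)
    (hxq : xs q = x)
    (hineq : ∀ i < q,
      g (xs i + (l i) • Pi.single (e i) 1) - g (xs i)
        - t * c ((l i) • Pi.single (e i) 1) ≥ (l i : ℝ) * τ)
    -- either the budget is exhausted, or the rejection conditions hold
    (hcases :
      (∑ e', x e' = k) ∨
      ((∑ e', (x e' : ℝ)) = ν * k ∧ (∑ e', (xbar e' : ℝ)) = μ * k ∧
        ∀ e' : E, 0 < xbar e' → ∃ y : E → ℕ, y ≤ x ∧
          g (y + Pi.single e' 1) - g y - t * c (Pi.single e' 1) < τ)) :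
    g x - c x ≥ ((t - 1) / (t + μ * (t - 1) - ν)) * g xstar
      - ((t - 1) * t / (t + μ * (t - 1) - ν)) * c xstar := by
  -- basic facts about t
  have hδ0 : 0 ≤ δ := by nlinarith
  have hs0 : 0 ≤ Real.sqrt δ := Real.sqrt_nonneg δ
  have hs2 : Real.sqrt δ ^ 2 = δ := Real.sq_sqrt hδ0
  have hsμ : μ < Real.sqrt δ := by nlinarith
  have ht1 : 1 + μ < t := by rw [ht]; linarith
  have htpos : 0 < t := by linarith
  have ht0 : t ≠ 0 := ne_of_gt htpos
  have ht1' : (1:ℝ) < t := by linarith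
  have ht1ne : t - 1 ≠ 0 := by intro h; nlinarith
  have hquad : t ^ 2 - (2 + μ) * t + μ + ν = 0 := by
    rw [ht]; rw [hδ] at hs2 ⊢; linear_combination hs2 / 4
  have hD : t + μ * (t - 1) - ν = t * (t - 1) := by linear_combination -hquad
  have hDpos : 0 < t * (t - 1) := mul_pos htpos (by linarith)
  -- coefficient simplifications
  have e1 : (t - 1) / (t * (t - 1)) = 1 / t := by
    field_simp
  have e2 : (t - 1) * t / (t * (t - 1)) = 1 := by
    field_simp
  -- properties of c
  have hcnn : ∀ z : E → ℕ, 0 ≤ c z := by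
    intro z; rw [hc]
    exact Finset.sum_nonneg fun e' _ => mul_nonneg (hw e') (Nat.cast_nonneg _)
  have hc0 : c 0 = 0 := by rw [hc]; simp
  have hcadd : ∀ a b : E → ℕ, c (a + b) = c a + c b := by
    intro a b
    rw [hc, hc, hc, ← Finset.sum_add_distrib]
    apply Finset.sum_congr rfl
    intro e' _
    simp only [Pi.add_apply]
    push_cast
    ring
  have hk0 : (k:ℝ) ≠ 0 := Nat.cast_ne_zero.mpr hk.ne'
  -- value of k * τ
  have hkτ : t * ((k:ℝ) * τ) = g xstar - t * c xstar := by
    rw [hτ, hD, e1]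
    field_simp
  -- telescoping: g (xs i) - t * c (xs i) ≥ (∑ xs i) * τ
  have key : ∀ i ≤ q, g (xs i) - t * c (xs i) ≥ (∑ e', ((xs i e' : ℝ))) * τ := by
    intro i
    induction i with
    | zero => intro _; rw [hx0]; simp [hg0, hc0]
    | succ i ih =>
      intro hi
      have hiq : i < q := hi
      have hIH := ih (le_of_lt hiq)
      have hs := hstep i hiq
      have hin := hineq i hiq
      have hca : c (xs (i+1)) = c (xs i) + c ((l i) • Pi.single (e i) 1) := by
        rw [hs, hcadd]
      have hsum : (∑ e', ((xs (i+1) e' : ℝ))) = (∑ e', ((xs i e' : ℝ))) + (l i : ℝ) := by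
        have : (∑ e', (((l i) • Pi.single (e i) 1 : E → ℕ) e' : ℝ)) = (l i : ℝ) := by
          simp [Pi.single_apply]
        rw [hs]
        simp only [Pi.add_apply]
        push_cast
        rw [Finset.sum_add_distrib]
        push_cast at this
        rw [this]
      rw [hsum, hca, hs]
      have ex1 : t * (c (xs i) + c ((l i) • Pi.single (e i) 1))
          = t * c (xs i) + t * c ((l i) • Pi.single (e i) 1) := by ring
      have ex2 : ((∑ e', ((xs i e' : ℝ))) + (l i : ℝ)) * τ
          = (∑ e', ((xs i e' : ℝ))) * τ + (l i : ℝ) * τ := by ring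
      rw [ex1, ex2]
      linarith [hin, hIH]
  have keyx : g x - t * c x ≥ (∑ e', ((x e' : ℝ))) * τ := by
    have := key q le_rfl
    rwa [hxq] at this
  -- main inequality: t * (g x - c x) ≥ g xstar - t * c xstar
  have main : t * (g x - c x) ≥ g xstar - t * c xstar := by
    rcases hcases with hA | ⟨hb1, hb2, hb3⟩
    · -- case (a): budget exhausted
      have hsx : (∑ e', ((x e' : ℝ))) = (k : ℝ) := by
        rw [← hA]; push_cast; rfl
      rw [hsx] at keyx
      have h2 : t * ((k:ℝ) * τ) ≤ t * (g x - t * c x) :=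
        mul_le_mul_of_nonneg_left keyx htpos.le
      have hcx := hcnn x
      have h3 : g xstar - t * c xstar ≤ t * g x - t * (t * c x) := by
        calc g xstar - t * c xstar = t * ((k:ℝ) * τ) := hkτ.symm
        _ ≤ t * (g x - t * c x) := h2
        _ = t * g x - t * (t * c x) := by ring
      have h4 : t * c x ≤ t * (t * c x) := by
        nlinarith [mul_nonneg htpos.le hcx, ht1']
      have h5 : t * (g x - c x) = t * g x - t * c x := by ring
      rw [ge_iff_le, h5]
      linarith
    · -- case (b)
      rw [hb1] at keyx
      -- marginal bound at x for elements with xbar > 0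
      have hmargx : ∀ e' : E, 0 < xbar e' →
          g (x + Pi.single e' 1) - g x < τ + t * w e' := by
        intro e' he'
        obtain ⟨y, hyx, hy⟩ := hb3 e' he'
        have h1 := hDR y x hyx e'
        have hcs : c (Pi.single e' 1) = w e' := by
          rw [hc]
          simp [Pi.single_apply]
        rw [hcs] at hy
        linarith
      -- DR decomposition
      have hdec := dr_decomp_aux g hDR x (∑ e', xbar e') xbar rfl
      have hxle : xstar ≤ x + xbar := by
        intro e'
        have := hxbar e'
        simp only [Pi.add_apply]
        omega
      have hgx : g xstar ≤ g (x + xbar) := hmono hxle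
      have hsumle : ∑ e', (xbar e' : ℝ) * (g (x + Pi.single e' 1) - g x)
          ≤ ∑ e', (xbar e' : ℝ) * (τ + t * w e') := by
        apply Finset.sum_le_sum
        intro e' _
        rcases Nat.eq_zero_or_pos (xbar e') with h0 | hpos
        · rw [h0]; simp
        · exact mul_le_mul_of_nonneg_left (le_of_lt (hmargx e' hpos)) (Nat.cast_nonneg _)
      have hsumval : ∑ e', (xbar e' : ℝ) * (τ + t * w e')
          = μ * k * τ + t * c xbar := by
        rw [hc, ← hb2, Finset.sum_mul, Finset.mul_sum, ← Finset.sum_add_distrib]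
        exact Finset.sum_congr rfl (fun e' _ => by ring)
      have hcbar : c xbar ≤ c xstar := by
        rw [hc, hc]
        apply Finset.sum_le_sum
        intro e' _
        apply mul_le_mul_of_nonneg_left _ (hw e')
        have := hxbar e'
        exact_mod_cast Nat.cast_le.mpr (by omega)
      have htc2 : t * c xbar ≤ t * c xstar := mul_le_mul_of_nonneg_left hcbar htpos.le
      have hA : g xstar - t * c xstar ≤ g x + μ * (k:ℝ) * τ := by
        linarith [hdec, hgx, hsumle, hsumval, htc2]
      have hBnn : 0 ≤ g x := hgnn x
      have hKB : (t - μ) * ((k:ℝ) * τ) ≤ g x := by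
        have hμK : μ * (k:ℝ) * τ = μ * ((k:ℝ) * τ) := by ring
        have hexp : (t - μ) * ((k:ℝ) * τ) = t * ((k:ℝ) * τ) - μ * ((k:ℝ) * τ) := by ring
        rw [hexp, hkτ]
        linarith [hA, hμK]
      have h1 : (t - 1) * ((t - μ) * ((k:ℝ) * τ)) ≤ (t - 1) * g x :=
        mul_le_mul_of_nonneg_left hKB (by linarith)
      have h2 : (t - 1) * ((t - μ) * ((k:ℝ) * τ)) = (t - ν) * ((k:ℝ) * τ) := by
        linear_combination ((k:ℝ) * τ) * hquad
      have hνK : ν * (k:ℝ) * τ = ν * ((k:ℝ) * τ) := by ring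
      have ee1 : (t - 1) * g x = t * g x - g x := by ring
      have ee2 : (t - ν) * ((k:ℝ) * τ) = t * ((k:ℝ) * τ) - ν * ((k:ℝ) * τ) := by ring
      have hgoal : t * g x - t * c x ≥ t * ((k:ℝ) * τ) := by
        linarith [keyx, hνK, h1, h2, ee1, ee2]
      have hexp2 : t * (g x - c x) = t * g x - t * c x := by ring
      rw [ge_iff_le, ← hkτ, hexp2]
      exact hgoal
  -- conclude from main
  rw [hD, e1, e2, ge_iff_le]
  have hdiv : (g xstar - t * c xstar) / t ≤ g x - c x := by
    rw [div_le_iff₀ htpos]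
    linarith [main]
  have heq : 1 / t * g xstar - 1 * c xstar = (g xstar - t * c xstar) / t := by
    field_simp
  rw [heq]
  exact hdiv
end

section
/- Let α ∈ (0,1] and let g : ℕ^E → ℝ be α-weakly submodular. Then for all x, y ∈ ℕ^E, Σ_{e∈E} y(e)·(g(x + χ_e) − g(x)) ≥ α·(g(x + y) − g(x)). (Sum of unit marginals above x dominates α times the marginal of y above x.) -/
/-! Induct on `y` one unit vector at a time. Passing from `y` to `y + χ_e` raises the right-hand
side by exactly `g (x + χ_e) - g x`, and the left-hand side by `α (g (x + y + χ_e) - g (x + y))`,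
which weak submodularity (with `s = x`, `t = x + y`) bounds by that same marginal. -/

theorem Pi.induction_add_single_one {E : Type*} [Finite E] [DecidableEq E]
    {p : (E → ℕ) → Prop} (zero : p 0) (step : ∀ y e, p y → p (y + Pi.single e 1))
    (y : E → ℕ) : p y := by
  suffices h : ∀ z, p z → p (z + y) by simpa using h 0 zero
  induction y using Pi.single_induction with
  | zero => simp
  | add f g hf hg => exact fun z hz => add_assoc z f g ▸ hg _ (hf z hz)
  | single e m =>
    induction m with
    | zero => simp
    | succ m ih =>
      intro z hz
      simpa [Pi.single_add, add_assoc] using step _ e (ih z hz)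

theorem mul_marginal_le_sum_unit_marginals {E : Type*} [Fintype E] [DecidableEq E]
    (α : ℝ) (g : (E → ℕ) → ℝ) (x : E → ℕ)
    (hws : ∀ t, x ≤ t → ∀ e, α * (g (t + Pi.single e 1) - g t) ≤ g (x + Pi.single e 1) - g x)
    (y : E → ℕ) :
    α * (g (x + y) - g x) ≤ ∑ e, (y e : ℝ) * (g (x + Pi.single e 1) - g x) := by
  induction y using Pi.induction_add_single_one with
  | zero => simp
  | step y e ih =>
    have hstep := hws (x + y) le_self_add e
    have hsum : ∑ a, ((y + Pi.single e 1 : E → ℕ) a : ℝ) * (g (x + Pi.single a 1) - g x) =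
        ∑ a, (y a : ℝ) * (g (x + Pi.single a 1) - g x) + (g (x + Pi.single e 1) - g x) := by
      simp [add_mul, Finset.sum_add_distrib, Pi.single_apply]
    rw [hsum, ← add_assoc]
    linarith

theorem stmt_7_general {E : Type*} [Fintype E] [DecidableEq E]
    (α : ℝ)
    (g : (E → ℕ) → ℝ)
    (hws : ∀ s t : E → ℕ, s ≤ t → ∀ e : E,
      α * (g (t + Pi.single e 1) - g t) ≤ g (s + Pi.single e 1) - g s)
    (x y : E → ℕ) :
    ∑ e, (y e : ℝ) * (g (x + Pi.single e 1) - g x) ≥ α * (g (x + y) - g x) :=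
  mul_marginal_le_sum_unit_marginals α g x (hws x) y

/-- For an α-weakly submodular g, the sum of unit marginals above x dominates
α times the marginal of y above x. -/
theorem stmt_7 {E : Type*} [Fintype E] [DecidableEq E]
    (α : ℝ) (hα0 : 0 < α) (hα1 : α ≤ 1)
    (g : (E → ℕ) → ℝ)
    (hws : ∀ s t : E → ℕ, s ≤ t → ∀ e : E,
      α * (g (t + Pi.single e 1) - g t) ≤ g (s + Pi.single e 1) - g s)
    (x y : E → ℕ) :
    ∑ e, (y e : ℝ) * (g (x + Pi.single e 1) - g x) ≥ α * (g (x + y) - g x) :=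
  stmt_7_general α g hws x y
end

section
/- Let α ∈ (0,1], let g : ℕ^E → ℝ be normalized and nonnegative, let c be nonnegative linear, and let x ∈ ℕ^E be obtained from the zero vector by q steps: x_0 = 0, x_i = x_{i-1} + l_i·χ_{e_i}, x_q = x, with g(x_{i-1} + l_i·χ_{e_i}) − g(x_{i-1}) − (1+α)·c(l_i·χ_{e_i}) ≥ l_i·τ_α for each i. If x(E) = k, then g(x) − c(x) ≥ k·τ_α. (Lemma 3.3: the output of the streaming algorithm for αG−C with full cardinality k has value at least kτ_α.) -/
/-!
The potential `g(xᵢ) - (1 + α)·c(xᵢ) - τ_α·xᵢ(E)` vanishes at `x₀ = 0` and, because `c` and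
`x ↦ x(E)` are additive, the step condition says exactly that it does not decrease from `xᵢ` to
`xᵢ₊₁`. Hence `g(x) - (1 + α)·c(x) ≥ τ_α·x(E) = k·τ_α`, and `g(x) - c(x)` is larger still as
`c ≥ 0`.
-/

open Finset

theorem Nat.apply_zero_le_of_forall_lt_le_succ {β : Type*} [Preorder β] {f : ℕ → β} {q : ℕ}
    (h : ∀ i < q, f i ≤ f (i + 1)) : f 0 ≤ f q := by
  induction q with
  | zero => exact le_rfl
  | succ n ih => exact (ih fun i hi => h i (hi.trans n.lt_succ_self)).trans (h n n.lt_succ_self)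

section WeightedSum

variable {E : Type*} [Fintype E] {c : (E → ℕ) → ℝ} {w : E → ℝ}

theorem map_add_of_eq_weighted_sum (hc : ∀ x : E → ℕ, c x = ∑ e, w e * (x e : ℝ))
    (a b : E → ℕ) : c (a + b) = c a + c b := by
  simp only [hc, Pi.add_apply, Nat.cast_add, mul_add, sum_add_distrib]

theorem nonneg_of_eq_weighted_sum (hw : ∀ e, 0 ≤ w e)
    (hc : ∀ x : E → ℕ, c x = ∑ e, w e * (x e : ℝ)) (x : E → ℕ) : 0 ≤ c x := by
  rw [hc]
  exact sum_nonneg fun e _ => mul_nonneg (hw e) (Nat.cast_nonneg _)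

theorem sum_nsmul_single_one [DecidableEq E] (l : ℕ) (e : E) :
    ∑ e', (l • Pi.single e 1 : E → ℕ) e' = l := by
  simp only [Pi.smul_apply, smul_eq_mul, ← mul_sum, sum_pi_single', mem_univ, if_true, mul_one]

end WeightedSum

theorem stmt_8_general {E : Type*} [Fintype E] [DecidableEq E]
    (α : ℝ) (hα0 : 0 < α)
    (g c : (E → ℕ) → ℝ)
    (hg0 : g 0 = 0)
    (w : E → ℝ) (hw : ∀ e, 0 ≤ w e)
    (hc : ∀ x : E → ℕ, c x = ∑ e, w e * (x e : ℝ))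
    (k : ℕ) (τα : ℝ)
    (q : ℕ) (e : ℕ → E) (l : ℕ → ℕ)
    (xs : ℕ → E → ℕ) (hx0 : xs 0 = 0)
    (hstep : ∀ i < q, xs (i + 1) = xs i + (l i) • Pi.single (e i) 1)
    (x : E → ℕ) (hxq : xs q = x)
    (hineq : ∀ i < q,
      g (xs i + (l i) • Pi.single (e i) 1) - g (xs i)
        - (1 + α) * c ((l i) • Pi.single (e i) 1) ≥ (l i : ℝ) * τα)
    (hcard : ∑ e', x e' = k) :
    g x - c x ≥ (k : ℝ) * τα := by
  set potential : ℕ → ℝ := fun i => g (xs i) - (1 + α) * c (xs i) - τα * ((∑ e', xs i e' : ℕ) : ℝ)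
  have potential_mono : ∀ i < q, potential i ≤ potential (i + 1) := by
    intro i hi
    simp only [potential, hstep i hi, map_add_of_eq_weighted_sum hc, Pi.add_apply,
      sum_add_distrib, sum_nsmul_single_one, Nat.cast_add]
    linarith [hineq i hi]
  have potential_zero : potential 0 = 0 := by simp [potential, hx0, hg0, hc]
  have hpot := Nat.apply_zero_le_of_forall_lt_le_succ potential_mono
  simp only [potential_zero, potential, hxq, hcard] at hpot
  nlinarith [nonneg_of_eq_weighted_sum hw hc x]

/-- Lemma 3.3: the output of the streaming algorithm for αG−C with full
cardinality k has value at least k·τ_α. -/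
theorem stmt_8 {E : Type*} [Fintype E] [DecidableEq E]
    (α : ℝ) (hα0 : 0 < α) (hα1 : α ≤ 1)
    (g c : (E → ℕ) → ℝ)
    (hg0 : g 0 = 0) (hgnn : ∀ x : E → ℕ, 0 ≤ g x)
    (w : E → ℝ) (hw : ∀ e, 0 ≤ w e)
    (hc : ∀ x : E → ℕ, c x = ∑ e, w e * (x e : ℝ))
    (k : ℕ) (hk : 0 < k) (τα : ℝ)
    (q : ℕ) (e : ℕ → E) (l : ℕ → ℕ) (hl : ∀ i < q, 0 < l i)
    (xs : ℕ → E → ℕ) (hx0 : xs 0 = 0)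
    (hstep : ∀ i < q, xs (i + 1) = xs i + (l i) • Pi.single (e i) 1)
    (x : E → ℕ) (hxq : xs q = x)
    (hineq : ∀ i < q,
      g (xs i + (l i) • Pi.single (e i) 1) - g (xs i)
        - (1 + α) * c ((l i) • Pi.single (e i) 1) ≥ (l i : ℝ) * τα)
    (hcard : ∑ e', x e' = k) :
    g x - c x ≥ (k : ℝ) * τα :=
  stmt_8_general α hα0 g c hg0 w hw hc k τα q e l xs hx0 hstep x hxq hineq hcard
end

section
/- Let α ∈ (0,1], let g : ℕ^E → ℝ be monotone and α-weakly submodular, let c be nonnegative linear, let τ_α ∈ ℝ, and let x, x* ∈ ℕ^E with x̄ = (x* − x) ∨ 0. Suppose that for every e ∈ E with x̄(e) > 0 there exists y_e ≤ x with g(y_e + χ_e) − g(y_e) − (1+α)·c(χ_e) < τ_α. Then α·(g(x*) − g(x)) ≤ τ_α·x̄(E) + (1+α)·c(x*); equivalently, g(x) ≥ g(x*) − ((1+α)/α)·c(x*) − (τ_α/α)·x̄(E). (Lower bound on g at the output of the αG−C streaming algorithm from the rejection conditions.) -/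
/-!
Since `x* ≤ x + x̄`, monotonicity reduces the claim to bounding `g (x + x̄) - g x`, which
telescopes into `x̄(E)` unit increments `g (y + χ_e) - g y` with `x ≤ y` and `x̄(e) > 0`.
Weak submodularity compares each of them with the rejected increment at `y_e ≤ x ≤ y`,
so `α` times it is below `τ_α + (1 + α) w(e)`; summing, `Σ_e x̄(e) w(e) ≤ c(x*)`.
-/

open Finset

theorem sub_le_mul_of_forall_increment_le {E : Type*} [DecidableEq E]
    (g : (E → ℕ) → ℝ) (x : E → ℕ) (e : E) (b : ℝ)
    (h : ∀ y, x ≤ y → g (y + Pi.single e 1) - g y ≤ b) (n : ℕ) :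
    g (x + Pi.single e n) - g x ≤ n * b := by
  induction n with
  | zero => simp
  | succ n ih =>
    have hstep := h (x + Pi.single e n) le_self_add
    rw [Pi.single_add, ← add_assoc]
    push_cast
    linarith

theorem sub_le_sum_mul_of_forall_increment_le {E : Type*} [Fintype E] [DecidableEq E]
    (g : (E → ℕ) → ℝ) (x z : E → ℕ) (b : E → ℝ)
    (h : ∀ e, z e ≠ 0 → ∀ y, x ≤ y → g (y + Pi.single e 1) - g y ≤ b e) :
    g (x + z) - g x ≤ ∑ e, z e * b e := by
  suffices key : ∀ s : Finset E,
      g (x + ∑ e ∈ s, Pi.single e (z e)) - g x ≤ ∑ e ∈ s, z e * b e by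
    simpa only [univ_sum_single] using key univ
  intro s
  induction s using Finset.induction_on with
  | empty => simp
  | insert a s has ih =>
    rw [sum_insert has, sum_insert has, ← add_assoc, add_right_comm]
    by_cases hza : z a = 0
    · simpa [hza] using ih
    have hbase : x ≤ x + ∑ e ∈ s, Pi.single e (z e) := le_self_add
    have hnew := sub_le_mul_of_forall_increment_le g _ a (b a)
      (fun y hy => h a hza y (hbase.trans hy)) (z a)
    linarith

theorem stmt_9_general {E : Type*} [Fintype E] [DecidableEq E]
    (α : ℝ) (hα0 : 0 < α)
    (g c : (E → ℕ) → ℝ)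
    (hmono : Monotone g)
    (hws : ∀ s t : E → ℕ, s ≤ t → ∀ e : E,
      α * (g (t + Pi.single e 1) - g t) ≤ g (s + Pi.single e 1) - g s)
    (w : E → ℝ) (hw : ∀ e, 0 ≤ w e)
    (hc : ∀ x : E → ℕ, c x = ∑ e, w e * (x e : ℝ))
    (τα : ℝ) (x xstar : E → ℕ)
    (xbar : E → ℕ) (hxbar : ∀ e, xbar e = xstar e - x e)
    (hrej : ∀ e : E, 0 < xbar e → ∃ y : E → ℕ, y ≤ x ∧
      g (y + Pi.single e 1) - g y - (1 + α) * c (Pi.single e 1) < τα) :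
    α * (g xstar - g x) ≤ τα * (∑ e, (xbar e : ℝ)) + (1 + α) * c xstar ∧
    g x ≥ g xstar - ((1 + α) / α) * c xstar
      - (τα / α) * (∑ e, (xbar e : ℝ)) := by
  have hc_single : ∀ e, c (Pi.single e 1) = w e := fun e => by
    simp [hc, Pi.single_apply]
  have hincr : ∀ e, xbar e ≠ 0 → ∀ y, x ≤ y →
      α * g (y + Pi.single e 1) - α * g y ≤ τα + (1 + α) * w e := by
    intro e he y hxy
    obtain ⟨ye, hye, hlt⟩ := hrej e (Nat.pos_of_ne_zero he)
    have := hws ye y (hye.trans hxy) e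
    rw [hc_single] at hlt
    linarith
  have htelescope := sub_le_sum_mul_of_forall_increment_le (fun y => α * g y) x xbar _ hincr
  have hcost : ∑ e, (xbar e : ℝ) * w e ≤ c xstar := by
    rw [hc]
    refine sum_le_sum fun e _ => ?_
    rw [mul_comm]
    exact mul_le_mul_of_nonneg_left (by rw [hxbar]; exact_mod_cast Nat.sub_le _ _) (hw e)
  have hxstar : g xstar ≤ g (x + xbar) := hmono fun e => by simp [hxbar]; omega
  have hmain : α * (g xstar - g x) ≤ τα * (∑ e, (xbar e : ℝ)) + (1 + α) * c xstar := by
    simp only [mul_add, sum_add_distrib, ← sum_mul, mul_left_comm _ (1 + α), ← mul_sum]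
      at htelescope
    have := mul_le_mul_of_nonneg_left hxstar hα0.le
    have := mul_le_mul_of_nonneg_left hcost (by linarith : (0 : ℝ) ≤ 1 + α)
    linarith
  refine ⟨hmain, ?_⟩
  have := (le_div_iff₀' hα0).mpr hmain
  rw [add_div, mul_div_right_comm, mul_div_right_comm] at this
  linarith

/-- Lower bound on g at the output of the αG−C streaming algorithm from the
rejection conditions. -/
theorem stmt_9 {E : Type*} [Fintype E] [DecidableEq E]
    (α : ℝ) (hα0 : 0 < α) (hα1 : α ≤ 1)
    (g c : (E → ℕ) → ℝ)
    (hmono : Monotone g)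
    (hws : ∀ s t : E → ℕ, s ≤ t → ∀ e : E,
      α * (g (t + Pi.single e 1) - g t) ≤ g (s + Pi.single e 1) - g s)
    (w : E → ℝ) (hw : ∀ e, 0 ≤ w e)
    (hc : ∀ x : E → ℕ, c x = ∑ e, w e * (x e : ℝ))
    (τα : ℝ) (x xstar : E → ℕ)
    (xbar : E → ℕ) (hxbar : ∀ e, xbar e = xstar e - x e)
    (hrej : ∀ e : E, 0 < xbar e → ∃ y : E → ℕ, y ≤ x ∧
      g (y + Pi.single e 1) - g y - (1 + α) * c (Pi.single e 1) < τα) :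
    α * (g xstar - g x) ≤ τα * (∑ e, (xbar e : ℝ)) + (1 + α) * c xstar ∧
    g x ≥ g xstar - ((1 + α) / α) * c xstar
      - (τα / α) * (∑ e, (xbar e : ℝ)) :=
  stmt_9_general α hα0 g c hmono hws w hw hc τα x xstar xbar hxbar hrej
end

section
/- Let α ∈ (0,1], let g : ℕ^E → ℝ be normalized, nonnegative, monotone and α-weakly submodular, let c be nonnegative linear, let τ_α ∈ ℝ, let k be a positive integer, and let x, x* ∈ ℕ^E with x̄ = (x* − x) ∨ 0. Suppose: (i) x is obtained from 0 by steps x_i = x_{i-1} + l_i·χ_{e_i} with g(x_{i-1} + l_i·χ_{e_i}) − g(x_{i-1}) − (1+α)·c(l_i·χ_{e_i}) ≥ l_i·τ_α for every step; (ii) for every e ∈ E with x̄(e) > 0 there exists y_e ≤ x with g(y_e + χ_e) − g(y_e) − (1+α)·c(χ_e) < τ_α; and (iii) x̄(E) = μ·k and x(E) = ν·k for reals μ, ν ∈ [0,1]. Then g(x) − c(x) ≥ (α/(1+α))·g(x*) − c(x*) + ((ν − μ)/(1+α))·k·τ_α. (Lemma 3.4.) -/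
/-- Lemma 3.4: lower bound for the value of the output of Algorithm 3 when the
cardinality budget is not exhausted. -/
theorem stmt_11 {E : Type*} [Fintype E] [DecidableEq E]
    (α : ℝ) (hα0 : 0 < α) (hα1 : α ≤ 1)
    (g c : (E → ℕ) → ℝ)
    (hg0 : g 0 = 0) (hgnn : ∀ x : E → ℕ, 0 ≤ g x)
    (hmono : Monotone g)
    (hws : ∀ s t : E → ℕ, s ≤ t → ∀ e : E,
      α * (g (t + Pi.single e 1) - g t) ≤ g (s + Pi.single e 1) - g s)
    (w : E → ℝ) (hw : ∀ e, 0 ≤ w e)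
    (hc : ∀ x : E → ℕ, c x = ∑ e, w e * (x e : ℝ))
    (τα : ℝ) (k : ℕ) (hk : 0 < k)
    (x xstar : E → ℕ)
    (xbar : E → ℕ) (hxbar : ∀ e, xbar e = xstar e - x e)
    -- (i) x is obtained from 0 by accepted steps
    (q : ℕ) (e : ℕ → E) (l : ℕ → ℕ) (hl : ∀ i < q, 0 < l i)
    (xs : ℕ → E → ℕ) (hx0 : xs 0 = 0)
    (hstep : ∀ i < q, xs (i + 1) = xs i + (l i) • Pi.single (e i) 1)
    (hxq : xs q = x)
    (hineq : ∀ i < q,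
      g (xs i + (l i) • Pi.single (e i) 1) - g (xs i)
        - (1 + α) * c ((l i) • Pi.single (e i) 1) ≥ (l i : ℝ) * τα)
    -- (ii) rejection conditions
    (hrej : ∀ e' : E, 0 < xbar e' → ∃ y : E → ℕ, y ≤ x ∧
      g (y + Pi.single e' 1) - g y - (1 + α) * c (Pi.single e' 1) < τα)
    -- (iii) cardinalities
    (μ ν : ℝ) (hμ0 : 0 ≤ μ) (hμ1 : μ ≤ 1) (hν0 : 0 ≤ ν) (hν1 : ν ≤ 1)
    (hμ : (∑ e', (xbar e' : ℝ)) = μ * k)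
    (hν : (∑ e', (x e' : ℝ)) = ν * k) :
    g x - c x ≥ (α / (1 + α)) * g xstar - c xstar
      + ((ν - μ) / (1 + α)) * (k : ℝ) * τα := by
  have h1α : (0:ℝ) < 1 + α := by linarith
  -- c of a single element
  have hcsingle : ∀ e0 : E, c (Pi.single e0 1) = w e0 := by
    intro e0
    rw [hc]
    rw [Fintype.sum_eq_single e0]
    · simp
    · intro b hb
      simp [Pi.single_apply, hb]
  -- Step A : g (xs i) - (1+α) c (xs i) ≥ (∑ (xs i)) τα by induction
  have stepA : ∀ i, i ≤ q →
      g (xs i) - (1 + α) * c (xs i) ≥ (∑ e', ((xs i e' : ℝ))) * τα := by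
    intro i
    induction i with
    | zero =>
      intro _
      simp [hx0, hg0, hc]
    | succ n ih =>
      intro hn1
      have hn : n < q := hn1
      have ihn := ih (le_of_lt hn)
      have hst := hstep n hn
      have hin := hineq n hn
      have hsum : (∑ e', ((xs (n+1) e' : ℝ)))
          = (∑ e', ((xs n e' : ℝ))) + (l n : ℝ) := by
        rw [hst]
        have h1 : ∀ e' : E, (((xs n + l n • (Pi.single (e n) 1 : E → ℕ)) e' : ℕ) : ℝ)
            = (xs n e' : ℝ) + (l n : ℝ) * (if e' = e n then 1 else 0) := by
          intro e'
          simp only [Pi.add_apply, Pi.smul_apply, Pi.single_apply, smul_eq_mul]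
          by_cases h : e' = e n <;> simp [h]
        rw [Finset.sum_congr rfl (fun e' _ => h1 e')]
        rw [Finset.sum_add_distrib]
        congr 1
        simp [mul_ite, Finset.sum_ite_eq']
      have hcsum : c (xs (n+1)) = c (xs n) + c (l n • Pi.single (e n) 1) := by
        rw [hst, hc, hc, hc, ← Finset.sum_add_distrib]
        apply Finset.sum_congr rfl
        intro e' _
        have h2 : ((xs n + l n • (Pi.single (e n) 1 : E → ℕ)) e' : ℕ)
            = xs n e' + l n * ((Pi.single (e n) 1 : E → ℕ) e') := by
          simp
        rw [h2]
        simp only [Pi.smul_apply, smul_eq_mul]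
        push_cast
        ring
      rw [← hst] at hin
      rw [hsum, hcsum]
      have expand : ((∑ e' : E, ((xs n e' : ℕ) : ℝ)) + (l n : ℝ)) * τα
          = (∑ e' : E, ((xs n e' : ℕ) : ℝ)) * τα + (l n : ℝ) * τα := by ring
      rw [expand]
      linarith
  have hA : g x - (1 + α) * c x ≥ ν * k * τα := by
    have := stepA q le_rfl
    rw [hxq, hν] at this
    exact this
  -- Step B : adding d ≤ xbar to x
  have stepB : ∀ n : ℕ, ∀ d : E → ℕ, (∑ e', d e') = n → d ≤ xbar →
      α * g (x + d) ≤ α * g x + ∑ e', (d e' : ℝ) * (τα + (1 + α) * w e') := by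
    intro n
    induction n with
    | zero =>
      intro d hd hdle
      have hd0 : d = 0 := by
        funext e'
        have := (Finset.sum_eq_zero_iff).mp hd e' (Finset.mem_univ e')
        simpa using this
      simp [hd0]
    | succ n ih =>
      intro d hd hdle
      -- find e0 with d e0 > 0
      have hex : ∃ e0 : E, 0 < d e0 := by
        by_contra h
        push_neg at h
        have : (∑ e', d e') = 0 := Finset.sum_eq_zero (fun e' _ => Nat.le_zero.mp (h e'))
        omega
      obtain ⟨e0, he0⟩ := hex
      set d' : E → ℕ := fun e' => d e' - (Pi.single e0 1 : E → ℕ) e' with hd'def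
      have hdd : d = d' + Pi.single e0 1 := by
        funext e'
        simp only [Pi.add_apply, hd'def, Pi.single_apply]
        by_cases h : e' = e0 <;> simp [h] <;> omega
      have hd'sum : (∑ e', d' e') = n := by
        have : (∑ e', d e') = (∑ e', d' e') + (∑ e', Pi.single e0 1 e') := by
          rw [hdd]; rw [← Finset.sum_add_distrib]; simp
        have hsing : (∑ e', Pi.single e0 1 e') = 1 := by
          rw [Fintype.sum_eq_single e0]
          · simp
          · intro b hb; simp [Pi.single_apply, hb]
        omega
      have hd'le : d' ≤ xbar := by
        intro e'
        exact le_trans (Nat.sub_le (d e') _) (hdle e')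
      have ihd := ih d' hd'sum hd'le
      -- rejection at e0
      have hxb0 : 0 < xbar e0 := lt_of_lt_of_le he0 (hdle e0)
      obtain ⟨y, hy, hylt⟩ := hrej e0 hxb0
      rw [hcsingle] at hylt
      have hyle : y ≤ x + d' := le_trans hy (by intro e'; simp)
      have hws' := hws y (x + d') hyle e0
      have hmarg : α * (g ((x + d') + Pi.single e0 1) - g (x + d'))
          ≤ τα + (1 + α) * w e0 := le_trans hws' (by linarith)
      have hxd : x + d = (x + d') + Pi.single e0 1 := by
        rw [hdd]; abel
      have hsumB : (∑ e', (d e' : ℝ) * (τα + (1 + α) * w e'))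
          = (∑ e', (d' e' : ℝ) * (τα + (1 + α) * w e')) + (τα + (1 + α) * w e0) := by
        rw [hdd]
        have : ∀ e' : E, (((d' + (Pi.single e0 1 : E → ℕ)) e' : ℕ) : ℝ) * (τα + (1 + α) * w e')
            = (d' e' : ℝ) * (τα + (1 + α) * w e')
              + (if e' = e0 then 1 else 0) * (τα + (1 + α) * w e') := by
          intro e'
          simp only [Pi.add_apply, Pi.single_apply]
          by_cases h : e' = e0 <;> simp [h] <;> push_cast <;> ring
        rw [Finset.sum_congr rfl (fun e' _ => this e')]
        rw [Finset.sum_add_distrib]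
        congr 1
        simp [ite_mul, Finset.sum_ite_eq']
      rw [hxd, hsumB]
      linarith
  -- apply step B with d = xbar
  have hB := stepB (∑ e', xbar e') xbar rfl le_rfl
  -- g xstar ≤ g (x + xbar)
  have hstar : g xstar ≤ g (x + xbar) := by
    apply hmono
    intro e'
    simp only [Pi.add_apply]
    rw [hxbar e']
    omega
  -- rewrite the sum in hB
  have hsum2 : (∑ e', (xbar e' : ℝ) * (τα + (1 + α) * w e'))
      = μ * k * τα + (1 + α) * c xbar := by
    rw [hc]
    rw [Finset.mul_sum]
    rw [← hμ, Finset.sum_mul]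
    rw [← Finset.sum_add_distrib]
    apply Finset.sum_congr rfl
    intro e' _
    ring
  rw [hsum2] at hB
  have hBB : α * g xstar ≤ α * g x + μ * k * τα + (1 + α) * c xbar := by
    have := mul_le_mul_of_nonneg_left hstar (le_of_lt hα0)
    linarith
  -- c xbar ≤ c xstar
  have hC : c xbar ≤ c xstar := by
    rw [hc, hc]
    apply Finset.sum_le_sum
    intro e' _
    apply mul_le_mul_of_nonneg_left _ (hw e')
    exact_mod_cast by rw [hxbar e']; omega
  -- final algebra
  rw [ge_iff_le, ← mul_le_mul_iff_right₀ h1α]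
  have expand : (1 + α) * (α / (1 + α) * g xstar - c xstar
      + (ν - μ) / (1 + α) * (k : ℝ) * τα)
      = α * g xstar - (1 + α) * c xstar + (ν - μ) * ((k : ℝ) * τα) := by
    field_simp
  rw [expand]
  have hCC := mul_le_mul_of_nonneg_left hC h1α.le
  nlinarith [hA, hBB, hCC]
end

section
/- Let α ∈ (0,1], let g : ℕ^E → ℝ be normalized, nonnegative, monotone and α-weakly submodular, let c be nonnegative linear, let k be a positive integer, and let x, x* ∈ ℕ^E with x̄ = (x* − x) ∨ 0. Let μ, ν ∈ [0,1] and set τ_α = (1/k)·(α·g(x*) − (1+α)·c(x*))/(1 + α + μ − ν) (note 1 + α + μ − ν > 0). Suppose x is obtained from 0 by steps x_i = x_{i-1} + l_i·χ_{e_i} with g(x_{i-1} + l_i·χ_{e_i}) − g(x_{i-1}) − (1+α)·c(l_i·χ_{e_i}) ≥ l_i·τ_α for every step, and that either (a) x(E) = k, or (b) x(E) = ν·k, x̄(E) = μ·k, and for every e ∈ E with x̄(e) > 0 there exists y_e ≤ x with g(y_e + χ_e) − g(y_e) − (1+α)·c(χ_e) < τ_α. Then g(x) − c(x) ≥ (α/(1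 + α + μ − ν))·g(x*) − ((1+α)/(1 + α + μ − ν))·c(x*). (Theorem 3.2: the bicriteria ratio of Algorithm 3 is (α/(1+α+μ−ν), (1+α)/(1+α+μ−ν)).) -/
lemma aux_incr_12 {E : Type*} [Fintype E] [DecidableEq E]
    (α : ℝ) (g : (E → ℕ) → ℝ) (x : E → ℕ) (M : E → ℝ) (zb : E → ℕ)
    (hM : ∀ e, 0 < zb e → ∀ t : E → ℕ, x ≤ t →
      α * (g (t + Pi.single e 1) - g t) ≤ M e) :
    ∀ n (z : E → ℕ), (∑ e, z e) = n → z ≤ zb →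
      α * (g (x + z) - g x) ≤ ∑ e, (z e : ℝ) * M e := by
  intro n
  induction n with
  | zero =>
    intro z hz _
    have hz0 : z = 0 := by
      funext e'
      have := Finset.sum_eq_zero_iff.mp hz e' (Finset.mem_univ e')
      simpa using this
    simp [hz0]
  | succ n ih =>
    intro z hz hzb
    have hex : ∃ e0, 0 < z e0 := by
      by_contra h
      push_neg at h
      have : ∀ e0, z e0 = 0 := fun e0 => Nat.le_zero.mp (h e0)
      simp [this] at hz
    obtain ⟨e0, he0⟩ := hex
    set z' : E → ℕ := Function.update z e0 (z e0 - 1) with hz'def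
    have hzz' : z = z' + Pi.single e0 1 := by
      funext e'
      by_cases h : e' = e0
      · subst h; simp [hz'def, Pi.single_apply]; omega
      · simp [hz'def, Pi.single_apply, Function.update, h]
    have hsingle : (∑ e', Pi.single e0 1 e') = 1 := by
      simp [Pi.single_apply]
    have hsumz' : (∑ e', z' e') = n := by
      have : (∑ e', z e') = (∑ e', z' e') + (∑ e', Pi.single e0 1 e') := by
        rw [hzz', ← Finset.sum_add_distrib]
        rfl
      omega
    have hz'le : z' ≤ zb := by
      intro e'
      refine le_trans ?_ (hzb e')
      by_cases h : e' = e0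
      · subst h; simp [hz'def]
      · simp [hz'def, Function.update, h]
    have IH := ih z' hsumz' hz'le
    have hbd := hM e0 (lt_of_lt_of_le he0 (hzb e0)) (x + z') (le_add_of_nonneg_right (by intro e'; simp))
    have hrw : x + z = (x + z') + Pi.single e0 1 := by
      rw [hzz']; ring
    have hsumM : ∑ e', (z e' : ℝ) * M e' = (∑ e', (z' e' : ℝ) * M e') + M e0 := by
      rw [hzz']
      have : ∀ e' : E, (((z' + Pi.single e0 1 : E → ℕ) e' : ℕ) : ℝ) * M e'
          = (z' e' : ℝ) * M e' + ((Pi.single e0 1 : E → ℕ) e' : ℝ) * M e' := by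
        intro e'; push_cast [Pi.add_apply]; ring
      rw [Finset.sum_congr rfl fun e' _ => this e', Finset.sum_add_distrib]
      congr 1
      simp [Pi.single_apply]
    rw [hrw, hsumM]
    have : α * (g ((x + z') + Pi.single e0 1) - g x)
        = α * (g ((x + z') + Pi.single e0 1) - g (x + z')) + α * (g (x + z') - g x) := by ring
    rw [this]
    linarith

/-- Theorem 3.2: the bicriteria ratio of Algorithm 3 is
(α/(1+α+μ−ν), (1+α)/(1+α+μ−ν)). -/
theorem stmt_12 {E : Type*} [Fintype E] [DecidableEq E]
    (α : ℝ) (hα0 : 0 < α) (hα1 : α ≤ 1)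
    (g c : (E → ℕ) → ℝ)
    (hg0 : g 0 = 0) (hgnn : ∀ x : E → ℕ, 0 ≤ g x)
    (hmono : Monotone g)
    (hws : ∀ s t : E → ℕ, s ≤ t → ∀ e : E,
      α * (g (t + Pi.single e 1) - g t) ≤ g (s + Pi.single e 1) - g s)
    (w : E → ℝ) (hw : ∀ e, 0 ≤ w e)
    (hc : ∀ x : E → ℕ, c x = ∑ e, w e * (x e : ℝ))
    (k : ℕ) (hk : 0 < k)
    (x xstar : E → ℕ)
    (xbar : E → ℕ) (hxbar : ∀ e, xbar e = xstar e - x e)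
    (μ ν : ℝ) (hμ0 : 0 ≤ μ) (hμ1 : μ ≤ 1) (hν0 : 0 ≤ ν) (hν1 : ν ≤ 1)
    (hpos : 0 < 1 + α + μ - ν)
    (τα : ℝ)
    (hτ : τα = (1 / (k : ℝ)) * (α * g xstar - (1 + α) * c xstar)
      / (1 + α + μ - ν))
    -- x is obtained from 0 by accepted steps
    (q : ℕ) (e : ℕ → E) (l : ℕ → ℕ) (hl : ∀ i < q, 0 < l i)
    (xs : ℕ → E → ℕ) (hx0 : xs 0 = 0)
    (hstep : ∀ i < q, xs (i + 1) = xs i + (l i) • Pi.single (e i) 1)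
    (hxq : xs q = x)
    (hineq : ∀ i < q,
      g (xs i + (l i) • Pi.single (e i) 1) - g (xs i)
        - (1 + α) * c ((l i) • Pi.single (e i) 1) ≥ (l i : ℝ) * τα)
    -- either the budget is exhausted, or the rejection conditions hold
    (hcases :
      (∑ e', x e' = k) ∨
      ((∑ e', (x e' : ℝ)) = ν * k ∧ (∑ e', (xbar e' : ℝ)) = μ * k ∧
        ∀ e' : E, 0 < xbar e' → ∃ y : E → ℕ, y ≤ x ∧
          g (y + Pi.single e' 1) - g y - (1 + α) * c (Pi.single e' 1) < τα)) :
    g x - c x ≥ (α / (1 + α + μ - ν)) * g xstar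
      - ((1 + α) / (1 + α + μ - ν)) * c xstar := by
  set K : ℝ := (k : ℝ) with hK
  have hK0 : (0:ℝ) < K := by rw [hK]; exact_mod_cast hk
  have hcadd : ∀ a b : E → ℕ, c (a + b) = c a + c b := by
    intro a b
    simp [hc, Pi.add_apply, Nat.cast_add, mul_add, Finset.sum_add_distrib]
  have hc0 : c 0 = 0 := by simp [hc]
  -- the right-hand side equals K * τα
  have hRHS : (α / (1 + α + μ - ν)) * g xstar
      - ((1 + α) / (1 + α + μ - ν)) * c xstar = K * τα := by
    rw [hτ]
    field_simp
  rw [hRHS]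
  -- telescoping along the steps
  have hsum : ∀ n, n ≤ q → g (xs n) - (1 + α) * c (xs n)
      ≥ (∑ e', ((xs n e' : ℝ))) * τα := by
    intro n
    induction n with
    | zero =>
      intro _
      simp [hx0, hg0, hc0]
    | succ n ih =>
      intro hn
      have hnq : n < q := hn
      have IH := ih (le_of_lt hnq)
      rw [hstep n hnq]
      have hci := hineq n hnq
      rw [hcadd]
      have hsplit : (∑ e', ((xs n + l n • Pi.single (e n) 1 : E → ℕ) e' : ℝ))
          = (∑ e', ((xs n e' : ℝ))) + (l n : ℝ) := by
        have : ∀ e' : E, ((xs n + l n • Pi.single (e n) 1 : E → ℕ) e' : ℝ)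
            = (xs n e' : ℝ) + (l n : ℝ) * ((Pi.single (e n) 1 : E → ℕ) e' : ℝ) := by
          intro e'; push_cast [Pi.add_apply, Pi.smul_apply, smul_eq_mul]; ring
        rw [Finset.sum_congr rfl fun e' _ => this e', Finset.sum_add_distrib]
        congr 1
        rw [← Finset.mul_sum]
        simp [Pi.single_apply]
      rw [hsplit]
      nlinarith [hci, IH]
  have h1 := hsum q le_rfl
  rw [hxq] at h1
  rcases hcases with hA | ⟨hν', hμ', hrej⟩
  · -- case (a): budget exhausted
    have hsx : (∑ e', ((x e' : ℝ))) = K := by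
      rw [hK, ← hA]
      push_cast
      rfl
    rw [hsx] at h1
    have hcx : 0 ≤ c x := by
      rw [hc]
      exact Finset.sum_nonneg fun e' _ => mul_nonneg (hw e') (Nat.cast_nonneg _)
    nlinarith [mul_nonneg hα0.le hcx]
  · -- case (b)
    rw [hν'] at h1
    -- bound on marginals for rejected elements
    have hM : ∀ e', 0 < xbar e' → ∀ t : E → ℕ, x ≤ t →
        α * (g (t + Pi.single e' 1) - g t) ≤ τα + (1 + α) * w e' := by
      intro e' he' t hxt
      obtain ⟨y, hyx, hy⟩ := hrej e' he'
      have hws' := hws y t (hyx.trans hxt) e'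
      have hcs : c (Pi.single e' 1) = w e' := by
        rw [hc]
        have : ∀ e'' : E, w e'' * (((Pi.single e' 1 : E → ℕ) e'' : ℕ) : ℝ)
            = if e'' = e' then w e' else 0 := by
          intro e''
          rw [Pi.single_apply]
          by_cases h : e'' = e'
          · simp [h]
          · simp [h]
        rw [Finset.sum_congr rfl fun e'' _ => this e'']
        simp
      rw [hcs] at hy
      linarith
    have hkey := aux_incr_12 α g x (fun e' => τα + (1 + α) * w e') xbar hM
      (∑ e', xbar e') xbar rfl le_rfl
    -- rewrite the sum
    have hsumM : (∑ e', (xbar e' : ℝ) * (τα + (1 + α) * w e'))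
        = (∑ e', (xbar e' : ℝ)) * τα + (1 + α) * c xbar := by
      rw [hc, Finset.sum_mul, Finset.mul_sum, ← Finset.sum_add_distrib]
      exact Finset.sum_congr rfl fun e' _ => by ring
    rw [hsumM, hμ'] at hkey
    -- monotonicity: g xstar ≤ g (x + xbar)
    have hS3 : g xstar ≤ g (x + xbar) := by
      apply hmono
      intro e'
      have h1 := hxbar e'
      simp only [Pi.add_apply]
      omega
    -- c xbar ≤ c xstar
    have hS4 : c xbar ≤ c xstar := by
      rw [hc, hc]
      apply Finset.sum_le_sum
      intro e' _
      have : xbar e' ≤ xstar e' := by rw [hxbar]; omega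
      exact mul_le_mul_of_nonneg_left (by exact_mod_cast this) (hw e')
    have hC : α * g xstar - (1 + α) * c xstar = (1 + α + μ - ν) * (K * τα) := by
      rw [hτ]
      field_simp
    have hS3' : α * g xstar ≤ α * g (x + xbar) :=
      mul_le_mul_of_nonneg_left hS3 hα0.le
    have hS4' : (1 + α) * c xbar ≤ (1 + α) * c xstar :=
      mul_le_mul_of_nonneg_left hS4 (by linarith)
    -- combine: α * g x ≥ (1 + α - ν) * (K * τα)
    have h2 : α * g x ≥ (1 + α - ν) * (K * τα) := by nlinarith [hkey, hS3', hS4', hC]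
    -- final combination
    have hfin : (1 + α) * (g x - c x) ≥ (1 + α) * (K * τα) := by nlinarith [h1, h2]
    have h1α : (0:ℝ) < 1 + α := by linarith
    exact le_of_mul_le_mul_left hfin h1α
end
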